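/- arXiv:0903.1676 — 12 statements merged into one kernel-verified Lean document; each statement's English description precedes it below -/
import Mathlib

section
/- For every real θ ≤ 2, the function f_θ(x) = (θ + √(1 + x²))·arcsinh(x)/x is strictly increasing on (0, ∞). -/
/-!
Substituting `x = sinh t` turns `f_θ` into `g_θ t = (θ + cosh t) · t / sinh t`, and `arsinh` is
increasing, so it suffices that `g_θ' > 0` on `(0, ∞)`. Up to the factor `sinh² t`, `g_θ'` is
`sinh t (θ + cosh t) - t (1 + θ cosh t)`, affine in `θ` with slope `sinh t - t cosh t < 0`; so the
case `θ = 2` suffices. Both `sinh t (2 + cosh t) - t (1 + 2 cosh t)` and `t cosh t - sinh t`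
vanish at `0` and have positive derivatives `2 sinh t (sinh t - t)` and `t sinh t` on `(0, ∞)`.
-/

open Real Set

lemma pos_of_hasDerivAt_of_pos {f f' : ℝ → ℝ} (hf : ∀ x, HasDerivAt f (f' x) x)
    (h0 : f 0 = 0) (hf' : ∀ x, 0 < x → 0 < f' x) {t : ℝ} (ht : 0 < t) : 0 < f t := by
  have hmono : StrictMonoOn f (Ici 0) :=
    strictMonoOn_of_hasDerivWithinAt_pos (convex_Ici 0)
      (fun x _ => (hf x).continuousAt.continuousWithinAt)
      (fun x _ => (hf x).hasDerivWithinAt)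
      (fun x hx => hf' x (by rwa [interior_Ici] at hx))
  simpa [h0] using hmono self_mem_Ici ht.le ht

lemma Real.sinh_lt_mul_cosh {t : ℝ} (ht : 0 < t) : sinh t < t * cosh t := by
  have hpos : 0 < t * cosh t - sinh t := by
    refine pos_of_hasDerivAt_of_pos (f := fun x => x * cosh x - sinh x)
      (f' := fun x => x * sinh x) (fun x => ?_) (by simp)
      (fun x hx => mul_pos hx (sinh_pos_iff.2 hx)) ht
    refine (((hasDerivAt_id x).mul (hasDerivAt_cosh x)).sub (hasDerivAt_sinh x)).congr_deriv ?_
    simp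
  linarith

lemma Real.mul_one_add_two_cosh_lt {t : ℝ} (ht : 0 < t) :
    t * (1 + 2 * cosh t) < sinh t * (2 + cosh t) := by
  have hpos : 0 < sinh t * (2 + cosh t) - t * (1 + 2 * cosh t) := by
    refine pos_of_hasDerivAt_of_pos (f := fun x => sinh x * (2 + cosh x) - x * (1 + 2 * cosh x))
      (f' := fun x => 2 * sinh x * (sinh x - x)) (fun x => ?_) (by simp) (fun x hx =>
        mul_pos (mul_pos two_pos (sinh_pos_iff.2 hx)) (sub_pos.2 (self_lt_sinh_iff.2 hx))) ht
    refine (((hasDerivAt_sinh x).mul ((hasDerivAt_cosh x).const_add 2)).sub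
      ((hasDerivAt_id x).mul (((hasDerivAt_cosh x).const_mul 2).const_add 1))).congr_deriv ?_
    simp only [id]
    linear_combination cosh_sq' x
  linarith

lemma Real.mul_one_add_mul_cosh_lt {θ t : ℝ} (hθ : θ ≤ 2) (ht : 0 < t) :
    t * (1 + θ * cosh t) < sinh t * (θ + cosh t) := by
  have h2 := mul_one_add_two_cosh_lt ht
  have hslope := mul_nonneg (sub_nonneg.2 hθ) (sub_pos.2 (sinh_lt_mul_cosh ht)).le
  linarith

lemma strictMonoOn_add_cosh_mul_div_sinh {θ : ℝ} (hθ : θ ≤ 2) :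
    StrictMonoOn (fun t => (θ + cosh t) * t / sinh t) (Ioi 0) := by
  refine strictMonoOn_of_hasDerivWithinAt_pos (convex_Ioi 0)
    (f' := fun t => (sinh t * (θ + cosh t) - t * (1 + θ * cosh t)) / sinh t ^ 2)
    (fun t ht => ?_) (fun t ht => ?_) (fun t ht => ?_)
  · exact (((continuous_const.add continuous_cosh).mul continuous_id).continuousAt.div
      continuous_sinh.continuousAt (sinh_pos_iff.2 ht).ne').continuousWithinAt
  · rw [interior_Ioi] at ht
    refine HasDerivAt.hasDerivWithinAt ?_
    refine ((((hasDerivAt_cosh t).const_add θ).mul (hasDerivAt_id t)).div (hasDerivAt_sinh t)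
      (sinh_pos_iff.2 ht).ne').congr_deriv ?_
    simp only [Pi.mul_apply, id]
    linear_combination (-t / sinh t ^ 2) * cosh_sq' t
  · rw [interior_Ioi] at ht
    exact div_pos (sub_pos.2 (mul_one_add_mul_cosh_lt hθ ht)) (pow_pos (sinh_pos_iff.2 ht) 2)

theorem stmt0 (θ : ℝ) (hθ : θ ≤ 2) :
    StrictMonoOn (fun x : ℝ => (θ + Real.sqrt (1 + x ^ 2)) * Real.arsinh x / x)
      (Set.Ioi (0 : ℝ)) := by
  have hcomp : (fun x : ℝ => (θ + Real.sqrt (1 + x ^ 2)) * Real.arsinh x / x) =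
      (fun t => (θ + cosh t) * t / sinh t) ∘ arsinh := by
    ext x
    simp only [Function.comp, cosh_arsinh, sinh_arsinh]
  rw [hcomp]
  exact (strictMonoOn_add_cosh_mul_div_sinh hθ).comp (arsinh_strictMono.strictMonoOn _)
    (fun x hx => arsinh_pos_iff.2 hx)
end

section
/- Let r > 0 and let θ ≤ 2 be real. For every x with 0 < x ≤ r, one has (θ + √(1 + x²))·arcsinh(x) ≤ ((θ + √(1 + r²))·arcsinh(r)/r)·x. -/
/-!
Writing `s = √(1 + t²)`, the function `f t = (θ + s) arsinh t / t` is increasing on `(0, ∞)`: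
`s t² f'(t) = θ (t - s arsinh t) + (s t - arsinh t)`, whose first bracket is `≤ 0` (it vanishes at `0`
and has derivative `-t arsinh t / s`). Hence the worst case is `θ = 2`, where the numerator is
`t (s + 2) - arsinh t (2 s + 1)`; this vanishes at `0` and has derivative
`2 t (t - arsinh t) / s ≥ 0`.
-/

open Real Set

lemma monotoneOn_of_hasDerivAt_nonneg {D : Set ℝ} (hD : Convex ℝ D) {f f' : ℝ → ℝ}
    (hf : ∀ y ∈ D, HasDerivAt f (f' y) y) (hf' : ∀ y ∈ interior D, 0 ≤ f' y) :
    MonotoneOn f D :=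
  monotoneOn_of_hasDerivWithinAt_nonneg hD
    (fun y hy => (hf y hy).continuousAt.continuousWithinAt)
    (fun y hy => (hf y (interior_subset hy)).hasDerivWithinAt) hf'

lemma hasDerivAt_sqrt_one_add_sq (t : ℝ) :
    HasDerivAt (fun t : ℝ => √(1 + t ^ 2)) (t / √(1 + t ^ 2)) t := by
  refine (((hasDerivAt_pow 2 t).const_add 1).sqrt (by positivity)).congr_deriv ?_
  field_simp
  norm_num

lemma arsinh_le_self {t : ℝ} (ht : 0 ≤ t) : arsinh t ≤ t := by
  rw [← sinh_le_sinh, sinh_arsinh]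
  exact self_le_sinh_iff.2 ht

lemma self_le_arsinh_mul_sqrt {t : ℝ} (ht : 0 ≤ t) : t ≤ arsinh t * √(1 + t ^ 2) := by
  have hderiv (y : ℝ) : HasDerivAt (fun t => arsinh t * √(1 + t ^ 2) - t)
      (arsinh y * (y / √(1 + y ^ 2))) y :=
    (((hasDerivAt_arsinh y).mul (hasDerivAt_sqrt_one_add_sq y)).sub (hasDerivAt_id' y)).congr_deriv
      (by rw [inv_mul_cancel₀ (by positivity), add_sub_cancel_left])
  have hmono := monotoneOn_of_hasDerivAt_nonneg (convex_Ici 0) (fun y _ => hderiv y)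
    fun y hy => by
      rw [interior_Ici, mem_Ioi] at hy
      exact mul_nonneg (arsinh_nonneg_iff.2 hy.le) (by positivity)
  simpa using hmono self_mem_Ici ht ht

lemma arsinh_mul_two_sqrt_add_one_le {t : ℝ} (ht : 0 ≤ t) :
    arsinh t * (2 * √(1 + t ^ 2) + 1) ≤ t * (√(1 + t ^ 2) + 2) := by
  have hderiv (y : ℝ) :
      HasDerivAt (fun t => t * (√(1 + t ^ 2) + 2) - arsinh t * (2 * √(1 + t ^ 2) + 1))
        (2 * y * (y - arsinh y) / √(1 + y ^ 2)) y := by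
    refine (((hasDerivAt_id' y).mul ((hasDerivAt_sqrt_one_add_sq y).add_const 2)).sub
      ((hasDerivAt_arsinh y).mul
        (((hasDerivAt_sqrt_one_add_sq y).const_mul 2).add_const 1))).congr_deriv ?_
    have hsq : √(1 + y ^ 2) ^ 2 = 1 + y ^ 2 := sq_sqrt (by positivity)
    field_simp
    linear_combination hsq
  have hmono := monotoneOn_of_hasDerivAt_nonneg (convex_Ici 0) (fun y _ => hderiv y)
    fun y hy => by
      rw [interior_Ici, mem_Ioi] at hy
      have := arsinh_le_self hy.le
      positivity
  simpa using hmono self_mem_Ici ht ht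

lemma hasDerivAt_add_sqrt_mul_arsinh_div (θ : ℝ) {t : ℝ} (ht : t ≠ 0) :
    HasDerivAt (fun t => (θ + √(1 + t ^ 2)) * arsinh t / t)
      ((θ * (t - arsinh t * √(1 + t ^ 2)) + (t * √(1 + t ^ 2) - arsinh t)) /
        (√(1 + t ^ 2) * t ^ 2)) t := by
  refine ((((hasDerivAt_sqrt_one_add_sq t).const_add θ).mul (hasDerivAt_arsinh t)).div
    (hasDerivAt_id' t) ht).congr_deriv ?_
  have hsq : √(1 + t ^ 2) ^ 2 = 1 + t ^ 2 := sq_sqrt (by positivity)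
  simp only [Pi.mul_apply]
  field_simp
  linear_combination (-arsinh t) * hsq

lemma monotoneOn_add_sqrt_mul_arsinh_div {θ : ℝ} (hθ : θ ≤ 2) :
    MonotoneOn (fun t => (θ + √(1 + t ^ 2)) * arsinh t / t) (Ioi 0) := by
  refine monotoneOn_of_hasDerivAt_nonneg (convex_Ioi 0)
    (fun t ht => hasDerivAt_add_sqrt_mul_arsinh_div θ (ne_of_gt ht)) fun t ht => ?_
  rw [interior_Ioi, mem_Ioi] at ht
  have hB := self_le_arsinh_mul_sqrt ht.le
  have hC := arsinh_mul_two_sqrt_add_one_le ht.le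
  have hθB : 0 ≤ (2 - θ) * (arsinh t * √(1 + t ^ 2) - t) :=
    mul_nonneg (by linarith) (by linarith)
  have hnum : 0 ≤ θ * (t - arsinh t * √(1 + t ^ 2)) + (t * √(1 + t ^ 2) - arsinh t) := by
    linarith
  positivity

theorem stmt3_general (r : ℝ) (θ : ℝ) (hθ : θ ≤ 2)
    (x : ℝ) (hx : 0 < x) (hxr : x ≤ r) :
    (θ + Real.sqrt (1 + x ^ 2)) * Real.arsinh x ≤
      ((θ + Real.sqrt (1 + r ^ 2)) * Real.arsinh r / r) * x :=
  (div_le_iff₀ hx).1 <|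
    monotoneOn_add_sqrt_mul_arsinh_div hθ hx (hx.trans_le hxr) hxr

theorem stmt3 (r : ℝ) (hr : 0 < r) (θ : ℝ) (hθ : θ ≤ 2)
    (x : ℝ) (hx : 0 < x) (hxr : x ≤ r) :
    (θ + Real.sqrt (1 + x ^ 2)) * Real.arsinh x ≤
      ((θ + Real.sqrt (1 + r ^ 2)) * Real.arsinh r / r) * x :=
  stmt3_general r θ hθ x hx hxr
end

section
/- Let r > 0 and let θ ≤ 2 be real. The constant 1 + θ in the lower bound is best possible: for every real c > 1 + θ there exists x with 0 < x ≤ r such that c·x > (θ + √(1 + x²))·arcsinh(x). -/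
/-! The function `(θ + √(1 + x²)) · arsinh x` vanishes at `0` with derivative `1 + θ` there, so its
slope from the origin tends to `1 + θ < c` as `x → 0⁺`. -/

open Real Topology

theorem exists_pos_le_lt_mul_of_hasDerivAt_zero {f : ℝ → ℝ} {d c r : ℝ} (hf0 : f 0 = 0)
    (hf : HasDerivAt f d 0) (hdc : d < c) (hr : 0 < r) :
    ∃ x, 0 < x ∧ x ≤ r ∧ f x < c * x := by
  have hslope : ∀ᶠ x in 𝓝[>] (0 : ℝ), slope f 0 x < c :=
    ((hasDerivAt_iff_tendsto_slope.mp hf).mono_left (nhdsWithin_mono 0 fun _ hx => ne_of_gt hx))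
      |>.eventually_lt_const hdc
  obtain ⟨x, hx, hx0, hxr⟩ :=
    (hslope.and (Ioo_mem_nhdsGT_of_mem ⟨le_rfl, hr⟩)).exists
  refine ⟨x, hx0, hxr.le, ?_⟩
  rwa [slope_def_field, hf0, sub_zero, sub_zero, div_lt_iff₀ hx0] at hx

theorem hasDerivAt_add_sqrt_one_add_sq_mul_arsinh_zero (θ : ℝ) :
    HasDerivAt (fun x => (θ + √(1 + x ^ 2)) * arsinh x) (1 + θ) 0 := by
  have hsqrt : HasDerivAt (fun x : ℝ => √(1 + x ^ 2)) 0 0 := by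
    simpa using ((hasDerivAt_pow 2 (0 : ℝ)).const_add 1).sqrt (by norm_num)
  exact ((hsqrt.const_add θ).fun_mul (hasDerivAt_arsinh 0)).congr_deriv (by simp [add_comm])

theorem stmt4_general (r : ℝ) (hr : 0 < r) (θ : ℝ)
    (c : ℝ) (hc : 1 + θ < c) :
    ∃ x : ℝ, 0 < x ∧ x ≤ r ∧
      (θ + Real.sqrt (1 + x ^ 2)) * Real.arsinh x < c * x :=
  exists_pos_le_lt_mul_of_hasDerivAt_zero (by simp)
    (hasDerivAt_add_sqrt_one_add_sq_mul_arsinh_zero θ) hc hr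

theorem stmt4 (r : ℝ) (hr : 0 < r) (θ : ℝ) (hθ : θ ≤ 2)
    (c : ℝ) (hc : 1 + θ < c) :
    ∃ x : ℝ, 0 < x ∧ x ≤ r ∧
      (θ + Real.sqrt (1 + x ^ 2)) * Real.arsinh x < c * x :=
  stmt4_general r hr θ c hc
end

section
/- For every real θ > 2 and every x > 0, one has 4·(1 − 1/θ²)·x ≤ (θ + √(1 + x²))·arcsinh(x). -/
/-!
`logPade` is the [4/4] Padé approximant of `log` at `1`: with `D` its denominator, the
derivative of `log - logPade` is `(t - 1)^8 / (t D(t)²) ≥ 0`, so `logPade ≤ log` on `[1, ∞)`. At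
`x + s` with `s = √(1 + x²)` the approximant collapses to
`x (25 s + 80) / (3 (2 s² + 16 s + 17))`, a lower bound for `arsinh x`. The theorem then
reduces to the polynomial inequality
`12 (θ² - 1) (2 s² + 16 s + 17) ≤ 5 θ² (θ + s) (5 s + 16)` for `θ ≥ 2`, `s ≥ 1`.
-/

open Real

noncomputable def logPade (t : ℝ) : ℝ :=
  5 / 6 * ((5 * t ^ 4 + 32 * t ^ 3 - 32 * t - 5) / (t ^ 4 + 16 * t ^ 3 + 36 * t ^ 2 + 16 * t + 1))

lemma hasDerivAt_log_sub_logPade {t : ℝ} (ht : 0 < t) :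
    HasDerivAt (fun t => log t - logPade t)
      ((t - 1) ^ 8 / (t * (t ^ 4 + 16 * t ^ 3 + 36 * t ^ 2 + 16 * t + 1) ^ 2)) t := by
  have hD : 0 < t ^ 4 + 16 * t ^ 3 + 36 * t ^ 2 + 16 * t + 1 := by positivity
  have hNum : HasDerivAt (fun t : ℝ => 5 * t ^ 4 + 32 * t ^ 3 - 32 * t - 5)
      (20 * t ^ 3 + 96 * t ^ 2 - 32) t :=
    ((((hasDerivAt_pow 4 t).const_mul 5).add ((hasDerivAt_pow 3 t).const_mul 32)).sub
      ((hasDerivAt_id t).const_mul 32)).sub (hasDerivAt_const t 5)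
      |>.congr_deriv (by push_cast; ring)
  have hDen : HasDerivAt (fun t : ℝ => t ^ 4 + 16 * t ^ 3 + 36 * t ^ 2 + 16 * t + 1)
      (4 * t ^ 3 + 48 * t ^ 2 + 72 * t + 16) t :=
    ((((hasDerivAt_pow 4 t).add ((hasDerivAt_pow 3 t).const_mul 16)).add
      ((hasDerivAt_pow 2 t).const_mul 36)).add ((hasDerivAt_id t).const_mul 16)).add
      (hasDerivAt_const t 1) |>.congr_deriv (by push_cast; ring)
  refine ((hasDerivAt_log ht.ne').sub ((hNum.div hDen hD.ne').const_mul (5 / 6))).congr_deriv ?_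
  field_simp
  ring

lemma logPade_le_log {y : ℝ} (hy : 1 ≤ y) : logPade y ≤ log y := by
  have hpos : ∀ t ∈ Set.Ici (1 : ℝ), 0 < t := fun t ht => zero_lt_one.trans_le ht
  have hmono : MonotoneOn (fun t => log t - logPade t) (Set.Ici 1) :=
    monotoneOn_of_hasDerivWithinAt_nonneg (convex_Ici 1)
      (fun t ht => (hasDerivAt_log_sub_logPade (hpos t ht)).continuousAt.continuousWithinAt)
      (fun t ht => (hasDerivAt_log_sub_logPade (hpos t (interior_subset ht))).hasDerivWithinAt)
      (fun t ht => by have := hpos t (interior_subset ht); positivity)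
  have h1 : logPade 1 = 0 := by norm_num [logPade]
  linarith [hmono Set.self_mem_Ici hy hy, log_one]

lemma logPade_add_sqrt (x : ℝ) :
    logPade (x + √(1 + x ^ 2)) =
      x * ((25 * √(1 + x ^ 2) + 80) /
        (3 * (2 * √(1 + x ^ 2) ^ 2 + 16 * √(1 + x ^ 2) + 17))) := by
  set s := √(1 + x ^ 2)
  have hs : s ^ 2 = 1 + x ^ 2 := sq_sqrt (by positivity)
  have hy : 0 < x + s := by nlinarith [sqrt_nonneg (1 + x ^ 2)]
  have hNum : 5 * (x + s) ^ 4 + 32 * (x + s) ^ 3 - 32 * (x + s) - 5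
      = 4 * x * (x + s) ^ 2 * (5 * s + 16) := by
    linear_combination (5 * s ^ 2 + 32 * s - 5 * x ^ 2 + 32 * x + 5) * hs
  have hDen : (x + s) ^ 4 + 16 * (x + s) ^ 3 + 36 * (x + s) ^ 2 + 16 * (x + s) + 1
      = 2 * (x + s) ^ 2 * (2 * s ^ 2 + 16 * s + 17) := by
    linear_combination (-3 * s ^ 2 - 4 * x * s - 16 * s - x ^ 2 - 16 * x - 1) * hs
  have : 0 < 2 * s ^ 2 + 16 * s + 17 := by positivity
  rw [logPade, hNum, hDen]
  field_simp
  ring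

lemma mul_rat_le_arsinh {x : ℝ} (hx : 0 ≤ x) :
    x * ((25 * √(1 + x ^ 2) + 80) / (3 * (2 * √(1 + x ^ 2) ^ 2 + 16 * √(1 + x ^ 2) + 17)))
      ≤ arsinh x := by
  rw [← logPade_add_sqrt, arsinh]
  exact logPade_le_log
    (le_add_of_nonneg_of_le hx (one_le_sqrt.mpr (le_add_of_nonneg_right (sq_nonneg x))))

lemma four_mul_one_sub_inv_sq_le {θ s : ℝ} (hθ : 2 ≤ θ) (hs : 1 ≤ s) :
    4 * (1 - 1 / θ ^ 2) ≤ (θ + s) * ((25 * s + 80) / (3 * (2 * s ^ 2 + 16 * s + 17))) := by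
  have ha : 0 ≤ θ - 2 := by linarith
  have hb : 0 ≤ s - 1 := by linarith
  have key : 12 * (θ ^ 2 - 1) * (2 * s ^ 2 + 16 * s + 17)
      ≤ 5 * θ ^ 2 * ((θ + s) * (5 * s + 16)) := by
    nlinarith [sq_nonneg (2 * (s - 1) - 5 * (θ - 2)), sq_nonneg (θ - 2),
      mul_nonneg (mul_nonneg ha hb) hb, mul_nonneg (mul_nonneg ha ha) hb,
      mul_nonneg (mul_nonneg (mul_nonneg ha ha) hb) hb, mul_nonneg (mul_nonneg ha ha) ha,
      mul_nonneg (mul_nonneg (mul_nonneg ha ha) ha) hb]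
  have : 0 < θ := by linarith
  rw [mul_div_assoc', le_div_iff₀ (by positivity), one_sub_div (by positivity), mul_div_assoc',
    div_mul_eq_mul_div, div_le_iff₀ (by positivity)]
  linarith

theorem stmt6 (θ : ℝ) (hθ : 2 < θ) (x : ℝ) (hx : 0 < x) :
    4 * (1 - 1 / θ ^ 2) * x ≤ (θ + Real.sqrt (1 + x ^ 2)) * Real.arsinh x := by
  set s := √(1 + x ^ 2)
  have hs : 1 ≤ s := one_le_sqrt.mpr (le_add_of_nonneg_right (sq_nonneg x))
  calc 4 * (1 - 1 / θ ^ 2) * x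
      ≤ (θ + s) * ((25 * s + 80) / (3 * (2 * s ^ 2 + 16 * s + 17))) * x :=
        mul_le_mul_of_nonneg_right (four_mul_one_sub_inv_sq_le hθ.le hs) hx.le
    _ = (θ + s) * (x * ((25 * s + 80) / (3 * (2 * s ^ 2 + 16 * s + 17)))) := by ring
    _ ≤ (θ + s) * arsinh x :=
        mul_le_mul_of_nonneg_left (mul_rat_le_arsinh hx.le) (by linarith)
end

section
/- Let r > 0 and let θ > 2 be real. For every x with 0 < x ≤ r, one has (θ + √(1 + x²))·arcsinh(x) ≤ max{1 + θ, (θ + √(1 + r²))·arcsinh(r)/r}·x. -/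
/-!
Put `x = sinh t` and `M` for the maximum; the claim becomes `F t ≥ 0` on `[0, T]`, `T = arsinh r`,
for `F t = M sinh t - (θ + cosh t) t`. Here `F 0 = 0`, `F T ≥ 0`, `F' 0 = M - 1 - θ ≥ 0` and
`F'' t = (M - 2) sinh t - t cosh t`. Since `t coth t` is increasing (a consequence of the convexity
of `sinh` on `[0, ∞)`), `F''` can only change sign from `+` to `-`. Hence so can `F'`, so `F` first
increases and then decreases, and its minimum on `[0, T]` is attained at an endpoint.
-/

open Real Set

theorem min_le_of_hasDerivAt_of_deriv_neg_imp {f f' : ℝ → ℝ} {a b t : ℝ}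
    (hf : ∀ s ∈ Icc a b, HasDerivAt f (f' s) s)
    (hf' : ∀ s u, a ≤ s → s ≤ u → u ≤ b → f' s < 0 → f' u ≤ 0) (ht : t ∈ Icc a b) :
    min (f a) (f b) ≤ f t := by
  have hcont : ∀ c d, a ≤ c → d ≤ b → ContinuousOn f (Icc c d) := fun c d hc hd s hs =>
    (hf s ⟨hc.trans hs.1, hs.2.trans hd⟩).continuousAt.continuousWithinAt
  have hderiv : ∀ c d, a ≤ c → d ≤ b → ∀ s ∈ interior (Icc c d),
      HasDerivWithinAt f (f' s) (interior (Icc c d)) s := fun c d hc hd s hs => by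
    rw [interior_Icc] at hs
    exact (hf s ⟨hc.trans hs.1.le, hs.2.le.trans hd⟩).hasDerivWithinAt
  by_cases hneg : ∃ s ∈ Icc a t, f' s < 0
  · obtain ⟨s, hs, hfs⟩ := hneg
    have hanti : AntitoneOn f (Icc t b) :=
      antitoneOn_of_hasDerivWithinAt_nonpos (convex_Icc t b) (hcont t b ht.1 le_rfl)
        (hderiv t b ht.1 le_rfl) fun u hu => by
          rw [interior_Icc] at hu
          exact hf' s u hs.1 (hs.2.trans hu.1.le) hu.2.le hfs
    exact min_le_of_right_le (hanti ⟨le_rfl, ht.2⟩ ⟨ht.2, le_rfl⟩ ht.2)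
  · push Not at hneg
    have hmono : MonotoneOn f (Icc a t) :=
      monotoneOn_of_hasDerivWithinAt_nonneg (convex_Icc a t) (hcont a t le_rfl ht.2)
        (hderiv a t le_rfl ht.2) fun u hu => hneg u (interior_subset hu)
    exact min_le_of_left_le (hmono ⟨le_rfl, ht.1⟩ ⟨ht.1, le_rfl⟩ ht.1)

namespace Real

theorem convexOn_sinh_Ici : ConvexOn ℝ (Ici 0) sinh := by
  refine MonotoneOn.convexOn_of_deriv (convex_Ici 0) continuous_sinh.continuousOn
    differentiable_sinh.differentiableOn ?_
  rw [deriv_sinh, interior_Ici]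
  exact cosh_strictMonoOn.monotoneOn.mono Ioi_subset_Ici_self

theorem mul_sinh_le_mul_sinh {u v : ℝ} (hu : 0 ≤ u) (huv : u ≤ v) :
    v * sinh u ≤ u * sinh v := by
  rcases hu.eq_or_lt with rfl | hu
  · simp
  have := convexOn_sinh_Ici.secant_mono (a := 0) self_mem_Ici hu.le (hu.le.trans huv)
    hu.ne' (hu.trans_le huv).ne' huv
  simp only [sinh_zero, sub_zero] at this
  rw [div_le_div_iff₀ hu (hu.trans_le huv)] at this
  linarith

theorem mul_cosh_mul_sinh_le {a b : ℝ} (ha : 0 ≤ a) (hab : a ≤ b) :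
    a * cosh a * sinh b ≤ b * cosh b * sinh a := by
  have h := mul_sinh_le_mul_sinh (sub_nonneg.2 hab) (by linarith : b - a ≤ a + b)
  rw [sinh_sub, sinh_add] at h
  linarith

theorem mul_sinh_le_mul_cosh_of_le {c a b : ℝ} (ha : 0 < a) (hab : a ≤ b)
    (h : c * sinh a ≤ a * cosh a) : c * sinh b ≤ b * cosh b := by
  have hsa : 0 < sinh a := sinh_pos_iff.2 ha
  have hsb : 0 ≤ sinh b := sinh_nonneg_iff.2 (ha.le.trans hab)
  refine le_of_mul_le_mul_right ?_ hsa
  calc c * sinh b * sinh a = c * sinh a * sinh b := by ring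
    _ ≤ a * cosh a * sinh b := mul_le_mul_of_nonneg_right h hsb
    _ ≤ b * cosh b * sinh a := mul_cosh_mul_sinh_le ha.le hab

theorem add_cosh_mul_le_mul_sinh {θ M T t : ℝ} (hM : 1 + θ ≤ M)
    (hT : (θ + cosh T) * T ≤ M * sinh T) (ht : 0 ≤ t) (htT : t ≤ T) :
    (θ + cosh t) * t ≤ M * sinh t := by
  set F : ℝ → ℝ := fun s => M * sinh s - (θ + cosh s) * s
  set F' : ℝ → ℝ := fun s => (M - 1) * cosh s - s * sinh s - θ
  set F'' : ℝ → ℝ := fun s => (M - 2) * sinh s - s * cosh s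
  have hF : ∀ s, HasDerivAt F (F' s) s := fun s =>
    (((hasDerivAt_sinh s).const_mul M).sub
      (((hasDerivAt_cosh s).const_add θ).mul (hasDerivAt_id' s))).congr_deriv (by ring)
  have hF' : ∀ s, HasDerivAt F' (F'' s) s := fun s =>
    ((((hasDerivAt_cosh s).const_mul (M - 1)).sub
      ((hasDerivAt_id' s).mul (hasDerivAt_sinh s))).sub_const θ).congr_deriv (by ring)
  have hF''_sign : ∀ s u, 0 ≤ s → s ≤ u → u ≤ T → F'' s < 0 → F'' u ≤ 0 := by
    intro s u hs hsu _ hneg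
    have hs : 0 < s := hs.lt_of_ne (by rintro rfl; simp [F''] at hneg)
    have := mul_sinh_le_mul_cosh_of_le hs hsu (c := M - 2) (by simp only [F''] at hneg; linarith)
    simp only [F'']; linarith
  have hF'_sign : ∀ s u, 0 ≤ s → s ≤ u → u ≤ T → F' s < 0 → F' u ≤ 0 := by
    intro s u hs hsu huT hneg
    have h := min_le_of_hasDerivAt_of_deriv_neg_imp (fun v _ => hF' v)
      (fun v w hv hvw hw => hF''_sign v w hv hvw (hw.trans huT)) ⟨hs, hsu⟩
    have hF'0 : 0 ≤ F' 0 := by simp only [F', cosh_zero, sinh_zero]; linarith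
    rcases min_le_iff.1 h with h | h <;> linarith
  have h := min_le_of_hasDerivAt_of_deriv_neg_imp (fun s _ => hF s) hF'_sign ⟨ht, htT⟩
  have hF0 : F 0 = 0 := by simp [F]
  have hFT : 0 ≤ F T := by simp only [F]; linarith
  have hFt : 0 ≤ F t := by rw [hF0] at h; exact (le_min le_rfl hFT).trans h
  simp only [F] at hFt; linarith

end Real

theorem stmt7_general (r : ℝ) (θ : ℝ)
    (x : ℝ) (hx : 0 < x) (hxr : x ≤ r) :
    (θ + Real.sqrt (1 + x ^ 2)) * Real.arsinh x ≤
      max (1 + θ) ((θ + Real.sqrt (1 + r ^ 2)) * Real.arsinh r / r) * x := by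
  have hr : 0 < r := hx.trans_le hxr
  have hT : (θ + cosh (arsinh r)) * arsinh r ≤
      max (1 + θ) ((θ + √(1 + r ^ 2)) * arsinh r / r) * sinh (arsinh r) := by
    rw [cosh_arsinh, sinh_arsinh]
    exact (div_le_iff₀ hr).1 (le_max_right _ _)
  have h := add_cosh_mul_le_mul_sinh (le_max_left _ _) hT (arsinh_nonneg_iff.2 hx.le)
    (arsinh_le_arsinh.2 hxr)
  rwa [cosh_arsinh, sinh_arsinh] at h

theorem stmt7 (r : ℝ) (hr : 0 < r) (θ : ℝ) (hθ : 2 < θ)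
    (x : ℝ) (hx : 0 < x) (hxr : x ≤ r) :
    (θ + Real.sqrt (1 + x ^ 2)) * Real.arsinh x ≤
      max (1 + θ) ((θ + Real.sqrt (1 + r ^ 2)) * Real.arsinh r / r) * x :=
  stmt7_general r θ x hx hxr
end

section
/- For every real θ ≤ 2 and every x > 0, one has (1 + θ)·sinh(x) < x·(θ + cosh(x)). -/
/-!
The difference `x (θ + cosh x) - (1 + θ) sinh x` is affine in `θ` with slope `x - sinh x < 0`,
so it suffices to treat `θ = 2`. There `g x = x (2 + cosh x) - 3 sinh x` satisfies
`g 0 = g' 0 = g'' 0 = 0` and `g''' x = x sinh x > 0` for `x > 0`, so integrating three times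
gives `g x > 0`.
-/

open Real Set

lemma pos_of_map_zero_of_hasDerivAt_pos {f f' : ℝ → ℝ} (hf : ∀ y, HasDerivAt f (f' y) y)
    (hf0 : f 0 = 0) (hf' : ∀ y, 0 < y → 0 < f' y) {x : ℝ} (hx : 0 < x) : 0 < f x := by
  have hmono : StrictMonoOn f (Ici 0) :=
    strictMonoOn_of_hasDerivWithinAt_pos (convex_Ici 0)
      (fun y _ ↦ (hf y).continuousAt.continuousWithinAt)
      (fun y _ ↦ (hf y).hasDerivWithinAt) (by rw [interior_Ici]; exact hf')
  simpa only [hf0] using hmono self_mem_Ici hx.le hx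

namespace Real

lemma sinh_lt_mul_cosh_s8 {x : ℝ} (hx : 0 < x) : sinh x < x * cosh x := by
  have hpos := pos_of_map_zero_of_hasDerivAt_pos (f := fun y ↦ y * cosh y - sinh y)
    (fun y ↦ (((hasDerivAt_id' y).mul (hasDerivAt_cosh y)).sub (hasDerivAt_sinh y)).congr_deriv
      (by ring))
    (by simp) (fun y hy ↦ mul_pos hy (sinh_pos_iff.2 hy)) hx
  linarith

lemma two_mul_cosh_lt_two_add_mul_sinh {x : ℝ} (hx : 0 < x) :
    2 * cosh x < 2 + x * sinh x := by
  have hpos := pos_of_map_zero_of_hasDerivAt_pos (f := fun y ↦ 2 - 2 * cosh y + y * sinh y)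
    (fun y ↦ ((((hasDerivAt_cosh y).const_mul 2).const_sub 2).add
      ((hasDerivAt_id' y).mul (hasDerivAt_sinh y))).congr_deriv (by ring))
    (by simp) (fun y hy ↦ sub_pos.2 (sinh_lt_mul_cosh_s8 hy)) hx
  linarith

lemma three_mul_sinh_lt_mul_two_add_cosh {x : ℝ} (hx : 0 < x) :
    3 * sinh x < x * (2 + cosh x) := by
  have hpos := pos_of_map_zero_of_hasDerivAt_pos (f := fun y ↦ y * (2 + cosh y) - 3 * sinh y)
    (f' := fun y ↦ 2 - 2 * cosh y + y * sinh y)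
    (fun y ↦ (((hasDerivAt_id' y).mul ((hasDerivAt_cosh y).const_add 2)).sub
      ((hasDerivAt_sinh y).const_mul 3)).congr_deriv (by ring))
    (by simp)
    (fun y hy ↦ by linarith [two_mul_cosh_lt_two_add_mul_sinh hy]) hx
  linarith

end Real

theorem stmt8 (θ : ℝ) (hθ : θ ≤ 2) (x : ℝ) (hx : 0 < x) :
    (1 + θ) * Real.sinh x < x * (θ + Real.cosh x) := by
  have hslope : 0 ≤ (2 - θ) * (Real.sinh x - x) :=
    mul_nonneg (sub_nonneg.2 hθ) (sub_pos.2 (Real.self_lt_sinh_iff.2 hx)).le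
  linarith [Real.three_mul_sinh_lt_mul_two_add_cosh hx]
end

section
/- For every real θ > 2 and every x > 0, one has 4·(1 − 1/θ²)·sinh(x) ≤ x·(θ + cosh(x)). -/
/-!
Multiplying by `θ ^ 2` and writing `θ = 2 + h`, the claim becomes the nonnegativity for `h ≥ 0` of
the cubic `P h² + 4 Q h + 4 R + x h³`, where `P = 6x + x cosh x - 4 sinh x`,
`Q = 3x + x cosh x - 4 sinh x` and `R = 2x + x cosh x - 3 sinh x`. Its quadratic part is
nonnegative since `R ≥ 0` (the hyperbolic Cusa–Huygens inequality) and `Q² ≤ P R`. Both are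
comparisons of power series in `x` whose coefficients have the right sign from some index on,
so they reduce to checking finitely many low-order terms.
-/

open Real Finset Nat

theorem quadratic_nonneg_of_sq_le_mul {R : Type*} [CommRing R] [LinearOrder R]
    [IsStrictOrderedRing R] {a b c : R} (ha : 0 ≤ a) (hc : 0 ≤ c) (h : b ^ 2 ≤ a * c) (t : R) :
    0 ≤ a * t ^ 2 + 2 * b * t + c := by
  rcases ha.eq_or_lt with rfl | ha
  · have hb : b = 0 := by nlinarith [sq_nonneg b]
    simpa [hb] using hc
  · refine nonneg_of_mul_nonneg_right ?_ ha
    nlinarith [sq_nonneg (a * t + b)]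

theorem hasSum_mul_cosh_sub_mul_sinh (x k : ℝ) :
    HasSum (fun n : ℕ ↦ (2 * n + 1 - k) * (x ^ (2 * n + 1) / (2 * n + 1)!))
      (x * cosh x - k * sinh x) :=
  (((hasSum_cosh x).mul_left x).sub ((hasSum_sinh x).mul_left k)).congr_fun fun n ↦ by
    rw [factorial_succ]
    push_cast
    field_simp
    ring

theorem hasSum_mul_sinh_sub_mul_cosh (x k : ℝ) :
    HasSum (fun n : ℕ ↦ (2 * n - k) * (x ^ (2 * n) / (2 * n)!))
      (x * sinh x - k * cosh x) := by
  have hsinh : HasSum (fun n : ℕ ↦ 2 * n * (x ^ (2 * n) / (2 * n)!)) (x * sinh x) := by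
    rw [← hasSum_nat_add_iff' 1, sum_range_one, Nat.cast_zero, mul_zero, zero_mul, sub_zero]
    refine ((hasSum_sinh x).mul_left x).congr_fun fun n ↦ ?_
    rw [show 2 * (n + 1) = 2 * n + 1 + 1 by ring, factorial_succ]
    push_cast
    field_simp
    ring
  exact (hsinh.sub ((hasSum_cosh x).mul_left k)).congr_fun fun n ↦ by ring

theorem sum_range_le_mul_cosh_sub_mul_sinh {x k : ℝ} (hx : 0 ≤ x) {N : ℕ} (hN : k ≤ 2 * N + 1) :
    ∑ n ∈ range N, (2 * n + 1 - k) * (x ^ (2 * n + 1) / (2 * n + 1)!) ≤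
      x * cosh x - k * sinh x := by
  refine sum_le_hasSum _ (fun n hn ↦ ?_) (hasSum_mul_cosh_sub_mul_sinh x k)
  have : (N : ℝ) ≤ n := by exact_mod_cast not_lt.mp (mt mem_range.mpr hn)
  exact mul_nonneg (by linarith) (by positivity)

theorem sum_range_le_mul_sinh_sub_mul_cosh {x k : ℝ} {N : ℕ} (hN : k ≤ 2 * N) :
    ∑ n ∈ range N, (2 * n - k) * (x ^ (2 * n) / (2 * n)!) ≤ x * sinh x - k * cosh x := by
  refine sum_le_hasSum _ (fun n hn ↦ ?_) (hasSum_mul_sinh_sub_mul_cosh x k)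
  have : (N : ℝ) ≤ n := by exact_mod_cast not_lt.mp (mt mem_range.mpr hn)
  exact mul_nonneg (by linarith) (div_nonneg ((even_two_mul n).pow_nonneg x) (by positivity))

theorem three_mul_sinh_le_mul_two_add_cosh {x : ℝ} (hx : 0 ≤ x) :
    3 * sinh x ≤ x * (2 + cosh x) := by
  have h := sum_range_le_mul_cosh_sub_mul_sinh (k := 3) (N := 1) hx (by norm_num)
  norm_num at h
  linarith

theorem three_mul_add_mul_cosh_sub_four_mul_sinh_sq_le {x : ℝ} (hx : 0 ≤ x) :
    (3 * x + x * cosh x - 4 * sinh x) ^ 2 ≤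
      (6 * x + x * cosh x - 4 * sinh x) * (2 * x + x * cosh x - 3 * sinh x) := by
  have h₁ := sum_range_le_mul_cosh_sub_mul_sinh (k := 1) (N := 3) hx (by norm_num)
  have h₂ := sum_range_le_mul_sinh_sub_mul_cosh (x := 2 * x) (k := 8) (N := 4) (by norm_num)
  simp only [sum_range_succ, sum_range_zero] at h₁ h₂
  norm_num [factorial, sinh_two_mul, cosh_two_mul, cosh_sq] at h₁ h₂
  nlinarith [mul_le_mul_of_nonneg_left h₁ (by positivity : 0 ≤ 2 * x), pow_nonneg hx 6]

theorem stmt9 (θ : ℝ) (hθ : 2 < θ) (x : ℝ) (hx : 0 < x) :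
    4 * (1 - 1 / θ ^ 2) * Real.sinh x ≤ x * (θ + Real.cosh x) := by
  have hR := three_mul_sinh_le_mul_two_add_cosh hx.le
  have hdisc := three_mul_add_mul_cosh_sub_four_mul_sinh_sq_le hx.le
  have hP : 0 ≤ 6 * x + x * cosh x - 4 * sinh x := by
    -- if `P < 0`, then `hdisc` forces `Q = 0`, so `P = Q + 3 * x ≥ 0`
    by_contra! hP
    nlinarith [sq_nonneg (3 * x + x * cosh x - 4 * sinh x)]
  have hquad := quadratic_nonneg_of_sq_le_mul (b := 2 * (3 * x + x * cosh x - 4 * sinh x)) hP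
    (by linarith : 0 ≤ 4 * (2 * x + x * cosh x - 3 * sinh x)) (by linear_combination 4 * hdisc)
    (θ - 2)
  have hθ₀ : θ ≠ 0 := by positivity
  have hexpand : x * (θ + cosh x) - 4 * (1 - 1 / θ ^ 2) * sinh x =
      ((6 * x + x * cosh x - 4 * sinh x) * (θ - 2) ^ 2
        + 2 * (2 * (3 * x + x * cosh x - 4 * sinh x)) * (θ - 2)
        + 4 * (2 * x + x * cosh x - 3 * sinh x) + x * (θ - 2) ^ 3) / θ ^ 2 := by
    field_simp
    ring
  rw [← sub_nonneg, hexpand]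
  exact div_nonneg (add_nonneg hquad (mul_nonneg hx.le (pow_nonneg (by linarith) 3))) (sq_nonneg θ)
end

section
/- Let r > 0 and let θ ≤ 2 be real. For every x with 0 < x ≤ arcsinh(r), one has x·(θ + cosh(x)) ≤ ((θ + √(1 + r²))·arcsinh(r)/r)·sinh(x). -/
/-!
Since `sinh (arsinh r) = r` and `cosh (arsinh r) = √(1 + r²)`, the claim says
`g x ≤ g (arsinh r)` for `g t = t (θ + cosh t) / sinh t`, so it suffices that `g` is monotone
on `(0, ∞)`. The numerator of `g'` is `θ (sinh t - t cosh t) + sinh t cosh t - t`; the bracket is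
nonpositive, so the worst case is `θ = 2`, and there the numerator vanishes at `0` and has
derivative `2 sinh t (sinh t - t) ≥ 0`.
-/

open Real Set

lemma sinh_le_mul_cosh {y : ℝ} (hy : 0 ≤ y) : sinh y ≤ y * cosh y := by
  have hderiv (t : ℝ) : HasDerivAt (fun t ↦ t * cosh t - sinh t) (t * sinh t) t :=
    (((hasDerivAt_id t).mul (hasDerivAt_cosh t)).sub (hasDerivAt_sinh t)).congr_deriv
      (by simp only [id]; ring)
  have hmono := monotone_of_hasDerivAt_nonneg hderiv fun t ↦ by
    rcases le_total 0 t with ht | ht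
    · exact mul_nonneg ht (sinh_nonneg_iff.2 ht)
    · exact mul_nonneg_of_nonpos_of_nonpos ht (sinh_nonpos_iff.2 ht)
  simpa using hmono hy

lemma two_mul_mul_cosh_add_self_le {y : ℝ} (hy : 0 ≤ y) :
    2 * (y * cosh y) + y ≤ sinh y * cosh y + 2 * sinh y := by
  have hderiv (t : ℝ) : HasDerivAt (fun t ↦ sinh t * cosh t + 2 * sinh t - t - 2 * (t * cosh t))
      (2 * (sinh t * (sinh t - t))) t :=
    (((((hasDerivAt_sinh t).mul (hasDerivAt_cosh t)).add
      ((hasDerivAt_sinh t).const_mul 2)).sub (hasDerivAt_id t)).sub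
      (((hasDerivAt_id t).mul (hasDerivAt_cosh t)).const_mul 2)).congr_deriv
      (by simp only [id]; linear_combination cosh_sq t)
  have hmono := monotone_of_hasDerivAt_nonneg hderiv fun t ↦ by
    rcases le_total 0 t with ht | ht
    · exact mul_nonneg zero_le_two
        (mul_nonneg (sinh_nonneg_iff.2 ht) (sub_nonneg.2 (self_le_sinh_iff.2 ht)))
    · exact mul_nonneg zero_le_two
        (mul_nonneg_of_nonpos_of_nonpos (sinh_nonpos_iff.2 ht)
          (sub_nonpos.2 (sinh_le_self_iff.2 ht)))
  have h0y := hmono hy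
  simp only [sinh_zero, cosh_zero] at h0y
  linarith

lemma hasDerivAt_mul_add_cosh_div_sinh (θ : ℝ) {t : ℝ} (ht : t ≠ 0) :
    HasDerivAt (fun t ↦ t * (θ + cosh t) / sinh t)
      ((θ * (sinh t - t * cosh t) + sinh t * cosh t - t) / sinh t ^ 2) t :=
  (((hasDerivAt_id t).mul ((hasDerivAt_const t θ).add (hasDerivAt_cosh t))).div
    (hasDerivAt_sinh t) (sinh_ne_zero.2 ht)).congr_deriv
    (by simp only [id, Pi.add_apply, Pi.mul_apply]; congr 1; linear_combination (-t) * cosh_sq t)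

lemma monotoneOn_mul_add_cosh_div_sinh {θ : ℝ} (hθ : θ ≤ 2) :
    MonotoneOn (fun t ↦ t * (θ + cosh t) / sinh t) (Ioi 0) := by
  refine monotoneOn_of_hasDerivWithinAt_nonneg (convex_Ioi 0)
    (fun t ht ↦ (hasDerivAt_mul_add_cosh_div_sinh θ ht.ne').continuousAt.continuousWithinAt)
    (fun t ht ↦ (hasDerivAt_mul_add_cosh_div_sinh θ (interior_subset ht).ne').hasDerivWithinAt)
    fun t ht ↦ div_nonneg ?_ (sq_nonneg _)
  rw [interior_Ioi] at ht
  have hθ_gap : 0 ≤ (2 - θ) * (t * cosh t - sinh t) :=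
    mul_nonneg (sub_nonneg.2 hθ) (sub_nonneg.2 (sinh_le_mul_cosh ht.le))
  linarith [two_mul_mul_cosh_add_self_le ht.le]

theorem stmt10 (r : ℝ) (hr : 0 < r) (θ : ℝ) (hθ : θ ≤ 2)
    (x : ℝ) (hx : 0 < x) (hxr : x ≤ Real.arsinh r) :
    x * (θ + Real.cosh x) ≤
      ((θ + Real.sqrt (1 + r ^ 2)) * Real.arsinh r / r) * Real.sinh x := by
  have key : x * (θ + cosh x) / sinh x ≤ arsinh r * (θ + cosh (arsinh r)) / sinh (arsinh r) :=
    monotoneOn_mul_add_cosh_div_sinh hθ hx (hx.trans_le hxr) hxr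
  rw [sinh_arsinh, cosh_arsinh, div_le_div_iff₀ (sinh_pos_iff.2 hx) hr] at key
  rw [div_mul_eq_mul_div, le_div_iff₀ hr]
  linear_combination key
end

section
/- Let r > 0 and let θ > 2 be real. For every x with 0 < x ≤ arcsinh(r), one has x·(θ + cosh(x)) ≤ max{1 + θ, (θ + √(1 + r²))·arcsinh(r)/r}·sinh(x). -/
/-!
Put `F y = M sinh y - y (θ + cosh y)` with `M` the maximum in the statement. Then
`F'' y = sinh y · (M - 2 - y coth y)`, and `y coth y` is increasing on `(0, ∞)`, so on `(0, ∞)`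
the function `F''` changes sign at most once, from `+` to `-`. This property passes from a
derivative to its primitive whenever the primitive is nonnegative at `0`: it passes to `F'` since
`F' 0 = M - 1 - θ ≥ 0`, and then to `F` since `F 0 = 0`. Finally `F (arsinh r) ≥ 0` is exactly
`M ≥ (θ + √(1 + r²)) arsinh r / r`, so `F ≥ 0` on `(0, arsinh r]`.
-/

open Real Set

def NonnegDownClosed (f : ℝ → ℝ) (a : ℝ) : Prop :=
  ∀ ⦃s t⦄, a < s → s ≤ t → 0 ≤ f t → 0 ≤ f s

lemma monotoneOn_Icc_of_hasDerivAt {g g' : ℝ → ℝ} (hg : ∀ y, HasDerivAt g (g' y) y) {s t : ℝ}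
    (hg' : ∀ y ∈ Ioo s t, 0 ≤ g' y) : MonotoneOn g (Icc s t) :=
  monotoneOn_of_hasDerivWithinAt_nonneg (convex_Icc s t)
    (fun y _ => (hg y).continuousAt.continuousWithinAt) (fun y _ => (hg y).hasDerivWithinAt)
    (by rwa [interior_Icc])

lemma antitoneOn_Icc_of_hasDerivAt {g g' : ℝ → ℝ} (hg : ∀ y, HasDerivAt g (g' y) y) {s t : ℝ}
    (hg' : ∀ y ∈ Ioo s t, g' y ≤ 0) : AntitoneOn g (Icc s t) :=
  antitoneOn_of_hasDerivWithinAt_nonpos (convex_Icc s t)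
    (fun y _ => (hg y).continuousAt.continuousWithinAt) (fun y _ => (hg y).hasDerivWithinAt)
    (by rwa [interior_Icc])

/-- If `g' s ≥ 0` then `g' ≥ 0` on `(a, s)` and `g` increases from `g a ≥ 0` to `g s`; otherwise
`g' < 0` on `(s, t)` and `g` decreases from `g s` to `g t ≥ 0`. -/
lemma NonnegDownClosed.of_hasDerivAt {g g' : ℝ → ℝ} {a : ℝ} (hg : ∀ y, HasDerivAt g (g' y) y)
    (hg' : NonnegDownClosed g' a) (ha : 0 ≤ g a) : NonnegDownClosed g a := by
  intro s t has hst hgt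
  rcases le_or_gt 0 (g' s) with hs | hs
  · have hmono := monotoneOn_Icc_of_hasDerivAt hg fun y hy => hg' hy.1 hy.2.le hs
    exact ha.trans (hmono ⟨le_rfl, has.le⟩ ⟨has.le, le_rfl⟩ has.le)
  · have hanti := antitoneOn_Icc_of_hasDerivAt (s := s) (t := t) hg fun y hy =>
      not_lt.1 fun hy' => hs.not_ge (hg' has hy.1.le hy'.le)
    exact hgt.trans (hanti ⟨le_rfl, hst⟩ ⟨hst, le_rfl⟩ hst)

lemma monotoneOn_mul_cosh_div_sinh : MonotoneOn (fun y => y * cosh y / sinh y) (Ioi 0) := by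
  set f' : ℝ → ℝ := fun y =>
    ((1 * cosh y + y * sinh y) * sinh y - y * cosh y * cosh y) / sinh y ^ 2
  have hderiv : ∀ y : ℝ, 0 < y → HasDerivAt (fun y => y * cosh y / sinh y) (f' y) y := fun y hy =>
    ((hasDerivAt_id y).mul (hasDerivAt_cosh y)).div (hasDerivAt_sinh y) (sinh_pos_iff.2 hy).ne'
  refine monotoneOn_of_hasDerivWithinAt_nonneg (f' := f') (convex_Ioi 0)
    (fun y hy => (hderiv y hy).continuousAt.continuousWithinAt) ?_ ?_ <;> rw [interior_Ioi]
  · exact fun y hy => (hderiv y hy).hasDerivWithinAt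
  · intro y hy
    have hsinh : y ≤ sinh y := self_le_sinh_iff.2 (le_of_lt hy)
    refine div_nonneg ?_ (sq_nonneg _)
    nlinarith [one_le_cosh y, cosh_sq y, mem_Ioi.1 hy]

lemma nonnegDownClosed_sub_mul_cosh (c : ℝ) :
    NonnegDownClosed (fun y => c * sinh y - y * cosh y) 0 := by
  intro s t hs hst ht
  have hmono := monotoneOn_mul_cosh_div_sinh hs (hs.trans_le hst) hst
  have hsinh_s := sinh_pos_iff.2 hs
  have hsinh_t := sinh_pos_iff.2 (hs.trans_le hst)
  simp only [div_le_div_iff₀ hsinh_s hsinh_t] at hmono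
  simp only [sub_nonneg] at ht ⊢
  nlinarith [mul_le_mul_of_nonneg_left ht hsinh_s.le]

lemma hasDerivAt_sinh_sub_mul_add_cosh (M θ y : ℝ) :
    HasDerivAt (fun y => M * sinh y - y * (θ + cosh y))
      (M * cosh y - (θ + cosh y + y * sinh y)) y := by
  refine (((hasDerivAt_sinh y).const_mul M).sub
    ((hasDerivAt_id y).mul ((hasDerivAt_const y θ).add (hasDerivAt_cosh y)))).congr_deriv ?_
  simp only [Pi.add_apply, id_eq]
  ring

lemma hasDerivAt_cosh_sub_add_mul_sinh (M θ y : ℝ) :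
    HasDerivAt (fun y => M * cosh y - (θ + cosh y + y * sinh y))
      ((M - 2) * sinh y - y * cosh y) y := by
  refine (((hasDerivAt_cosh y).const_mul M).sub
    (((hasDerivAt_const y θ).add (hasDerivAt_cosh y)).add
      ((hasDerivAt_id y).mul (hasDerivAt_sinh y)))).congr_deriv ?_
  simp only [id_eq]
  ring

lemma mul_add_cosh_le_mul_sinh {M θ b x : ℝ} (hM : 1 + θ ≤ M) (hx : 0 < x) (hxb : x ≤ b)
    (hb : b * (θ + cosh b) ≤ M * sinh b) : x * (θ + cosh x) ≤ M * sinh x := by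
  have hF' : NonnegDownClosed (fun y => M * cosh y - (θ + cosh y + y * sinh y)) 0 :=
    (nonnegDownClosed_sub_mul_cosh (M - 2)).of_hasDerivAt (hasDerivAt_cosh_sub_add_mul_sinh M θ)
      (by simp only [cosh_zero, sinh_zero, mul_zero, mul_one, add_zero]; linarith)
  have hF : NonnegDownClosed (fun y => M * sinh y - y * (θ + cosh y)) 0 :=
    hF'.of_hasDerivAt (hasDerivAt_sinh_sub_mul_add_cosh M θ) (by simp)
  exact sub_nonneg.1 (hF hx hxb (sub_nonneg.2 hb))

theorem stmt11_general (r : ℝ) (hr : 0 < r) (θ : ℝ)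
    (x : ℝ) (hx : 0 < x) (hxr : x ≤ Real.arsinh r) :
    x * (θ + Real.cosh x) ≤
      max (1 + θ) ((θ + Real.sqrt (1 + r ^ 2)) * Real.arsinh r / r) * Real.sinh x := by
  refine mul_add_cosh_le_mul_sinh (le_max_left _ _) hx hxr ?_
  rw [cosh_arsinh, sinh_arsinh, mul_comm (arsinh r)]
  exact (div_le_iff₀ hr).1 (le_max_right _ _)

theorem stmt11 (r : ℝ) (hr : 0 < r) (θ : ℝ) (hθ : 2 < θ)
    (x : ℝ) (hx : 0 < x) (hxr : x ≤ Real.arsinh r) :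
    x * (θ + Real.cosh x) ≤
      max (1 + θ) ((θ + Real.sqrt (1 + r ^ 2)) * Real.arsinh r / r) * Real.sinh x :=
  stmt11_general r hr θ x hx hxr
end

section
/- Let r > 0 and let a ≥ 0 be real. The inequality (a + 1)·x/(a + √(1 + x²)) ≤ arcsinh(x) holds for all x with 0 ≤ x ≤ r if and only if a ≤ 2. -/
/-!
Put `s = √(1 + x²)`. The difference `arsinh x - (a + 1) x / (a + s)` vanishes at `0` and has
derivative `(s - 1) (s - 1 - (a - 2)(a + 1)) / (s (a + s)²)`. For `a ≤ 2` this is nonnegative, so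
the difference is nonnegative on `[0, ∞)`. For `a > 2` it is negative while
`0 < s - 1 < (a - 2)(a + 1)`, which holds on an initial interval `(0, t)` because `s - 1 ≤ x`;
there the difference decreases below `0`.
-/

open Real Set

noncomputable def arsinhGap (a x : ℝ) : ℝ :=
  arsinh x - (a + 1) * x / (a + √(1 + x ^ 2))

lemma arsinhGap_zero (a : ℝ) : arsinhGap a 0 = 0 := by
  simp [arsinhGap]

lemma one_le_sqrt_one_add_sq (x : ℝ) : 1 ≤ √(1 + x ^ 2) :=
  one_le_sqrt.mpr (by nlinarith)

lemma one_lt_sqrt_one_add_sq {x : ℝ} (hx : x ≠ 0) : 1 < √(1 + x ^ 2) :=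
  lt_sqrt zero_le_one |>.mpr (by simpa using pow_pos (abs_pos.mpr hx) 2)

lemma sqrt_one_add_sq_le {x : ℝ} (hx : 0 ≤ x) : √(1 + x ^ 2) ≤ 1 + x :=
  sqrt_le_left (by linarith) |>.mpr (by nlinarith)

lemma hasDerivAt_arsinhGap {a : ℝ} (ha : -1 < a) (x : ℝ) :
    HasDerivAt (arsinhGap a)
      ((√(1 + x ^ 2) - 1) * (√(1 + x ^ 2) - 1 - (a - 2) * (a + 1)) /
        (√(1 + x ^ 2) * (a + √(1 + x ^ 2)) ^ 2)) x := by
  set s := √(1 + x ^ 2) with hs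
  have hs1 : 1 ≤ s := one_le_sqrt_one_add_sq x
  have hss : s ^ 2 = 1 + x ^ 2 := sq_sqrt (by positivity)
  have hden : a + s ≠ 0 := by linarith
  have hsqrt : HasDerivAt (fun x : ℝ => √(1 + x ^ 2)) (x / s) x := by
    convert ((hasDerivAt_pow 2 x).const_add 1).sqrt (by positivity) using 1
    field_simp
    ring
  have hquot : HasDerivAt (fun x : ℝ => (a + 1) * x / (a + √(1 + x ^ 2)))
      (((a + 1) * (a + s) - (a + 1) * x * (x / s)) / (a + s) ^ 2) x := by
    have hlin : HasDerivAt (fun x : ℝ => (a + 1) * x) (a + 1) x := by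
      simpa using (hasDerivAt_id x).const_mul (a + 1)
    exact hlin.div (hsqrt.const_add a) hden
  refine ((hasDerivAt_arsinh x).sub hquot).congr_deriv ?_
  rw [← hs]
  field_simp
  nlinarith [hss]

lemma differentiable_arsinhGap {a : ℝ} (ha : -1 < a) : Differentiable ℝ (arsinhGap a) :=
  fun x => (hasDerivAt_arsinhGap ha x).differentiableAt

lemma arsinhGap_nonneg {a x : ℝ} (ha : -1 < a) (ha2 : a ≤ 2) (hx : 0 ≤ x) :
    0 ≤ arsinhGap a x := by
  have hmono : MonotoneOn (arsinhGap a) (Ici 0) := by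
    have hdiff := differentiable_arsinhGap ha
    refine monotoneOn_of_deriv_nonneg (convex_Ici 0) hdiff.continuous.continuousOn
      hdiff.differentiableOn fun y _ => ?_
    rw [(hasDerivAt_arsinhGap ha y).deriv]
    have hs1 := one_le_sqrt_one_add_sq y
    have hfactor : (a - 2) * (a + 1) ≤ 0 :=
      mul_nonpos_of_nonpos_of_nonneg (by linarith) (by linarith)
    exact div_nonneg (mul_nonneg (by linarith) (by linarith)) (by positivity)
  simpa [arsinhGap_zero] using hmono self_mem_Ici hx hx

lemma arsinhGap_neg {a t : ℝ} (ha : -1 < a) (ht : 0 < t) (hta : t ≤ (a - 2) * (a + 1)) :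
    arsinhGap a t < 0 := by
  have hanti : StrictAntiOn (arsinhGap a) (Icc 0 t) := by
    refine strictAntiOn_of_deriv_neg (convex_Icc 0 t)
      (differentiable_arsinhGap ha).continuous.continuousOn fun y hy => ?_
    rw [interior_Icc] at hy
    rw [(hasDerivAt_arsinhGap ha y).deriv]
    have hs1 := one_lt_sqrt_one_add_sq hy.1.ne'
    have hsy := sqrt_one_add_sq_le hy.1.le
    exact div_neg_of_neg_of_pos (mul_neg_of_pos_of_neg (by linarith) (by linarith [hy.2]))
      (mul_pos (by linarith) (pow_pos (by linarith) 2))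
  simpa [arsinhGap_zero] using hanti (left_mem_Icc.mpr ht.le) (right_mem_Icc.mpr ht.le) ht

theorem stmt12 (r : ℝ) (hr : 0 < r) (a : ℝ) (ha : 0 ≤ a) :
    (∀ x : ℝ, 0 ≤ x → x ≤ r →
      (a + 1) * x / (a + Real.sqrt (1 + x ^ 2)) ≤ Real.arsinh x) ↔ a ≤ 2 := by
  have ha1 : -1 < a := by linarith
  constructor
  · intro h
    by_contra! ha2
    have hpos : 0 < (a - 2) * (a + 1) := mul_pos (by linarith) (by linarith)
    have ht : 0 < min r ((a - 2) * (a + 1)) := lt_min hr hpos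
    have hneg := arsinhGap_neg ha1 ht (min_le_right _ _)
    have := h _ ht.le (min_le_left _ _)
    rw [arsinhGap] at hneg
    linarith
  · intro ha2 x hx _
    have := arsinhGap_nonneg ha1 ha2 hx
    rw [arsinhGap] at this
    linarith
end

section
/- Let r > 0 and let b ≥ 0 be real. The inequality arcsinh(x) ≤ (b + 1)·x/(b + √(1 + x²)) holds for all x with 0 ≤ x ≤ r if and only if b ≥ (√(1 + r²)·arcsinh(r) − r)/(r − arcsinh(r)). -/
/-!
Substituting `x = sinh t` turns the inequality into `t cosh t - sinh t ≤ b (sinh t - t)`, so it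
holds on `[0, r]` iff `b` bounds the ratio `(cosh t * t - sinh t) / (sinh t - t)` on
`(0, arsinh r]`. This ratio is increasing: the numerator of its derivative is
`(cosh t - 1)(sinh t + t) - t² sinh t = ∑_{n ≥ 1} (4ⁿ - 4n²) t^(2n+1) / (2n+1)!`,
a power series with nonnegative coefficients. Hence the bound is its value at `t = arsinh r`.
-/

open Real Set
open scoped Nat

lemma two_mul_le_two_pow (n : ℕ) : 2 * n ≤ 2 ^ n := by
  cases n with
  | zero => simp
  | succ k => rw [pow_succ]; have := Nat.lt_two_pow_self (n := k); omega

lemma four_mul_sq_le_four_pow (n : ℕ) : 4 * (n : ℝ) ^ 2 ≤ 4 ^ n := by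
  have h : ((2 * n : ℕ) : ℝ) ≤ ((2 ^ n : ℕ) : ℝ) := by exact_mod_cast two_mul_le_two_pow n
  push_cast at h
  calc 4 * (n : ℝ) ^ 2 = (2 * n) ^ 2 := by ring
    _ ≤ (2 ^ n) ^ 2 := by gcongr
    _ = 4 ^ n := by rw [← pow_mul, mul_comm, pow_mul]; norm_num

lemma sq_mul_sinh_le_cosh_sub_one_mul_sinh_add_self {t : ℝ} (ht : 0 ≤ t) :
    t ^ 2 * sinh t ≤ (cosh t - 1) * (sinh t + t) := by
  set c : ℕ → ℝ := fun n ↦ t ^ (2 * n + 1) / (2 * n + 1)! with hc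
  have h_sinh : HasSum c (sinh t) := hasSum_sinh t
  have h_sinh_mul_cosh : HasSum (fun n ↦ 4 ^ n * c n) (sinh t * cosh t) := by
    have h := (hasSum_sinh (2 * t)).div_const 2
    rw [sinh_two_mul, mul_assoc, mul_div_cancel_left₀ _ two_ne_zero] at h
    refine h.congr_fun fun n ↦ ?_
    rw [hc, mul_pow, pow_succ, pow_mul]
    ring
  have h_mul_cosh : HasSum (fun n ↦ (2 * n + 1) * c n) (t * cosh t) := by
    refine ((hasSum_cosh t).mul_left t).congr_fun fun n ↦ ?_
    simp only [hc, Nat.factorial_succ, pow_succ]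
    push_cast
    field_simp
  have h_sq_mul_sinh : HasSum (fun n ↦ 2 * n * (2 * n + 1) * c n) (t ^ 2 * sinh t) := by
    rw [← hasSum_nat_add_iff' 1]
    simp only [Finset.sum_range_one, CharP.cast_eq_zero, mul_zero, zero_mul, sub_zero]
    refine ((hasSum_sinh t).mul_left (t ^ 2)).congr_fun fun n ↦ ?_
    have hfac : ((2 * (n + 1) + 1)! : ℝ) = (2 * n + 3) * (2 * n + 2) * (2 * n + 1)! := by
      rw [show 2 * (n + 1) + 1 = 2 * n + 1 + 1 + 1 by ring, Nat.factorial_succ, Nat.factorial_succ]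
      push_cast
      ring
    simp only [hc, hfac]
    push_cast
    field_simp
    ring
  have h_self : HasSum (fun n ↦ if n = 0 then t else 0) t := hasSum_ite_eq 0 t
  have h_all := ((h_sinh_mul_cosh.add h_mul_cosh).sub (h_sinh.add h_sq_mul_sinh)).sub h_self
  have h_nonneg := h_all.nonneg fun n ↦ by
    rcases eq_or_ne n 0 with rfl | hn
    · simp [hc]
    · have : 0 ≤ (4 ^ n - 4 * (n : ℝ) ^ 2) * c n :=
        mul_nonneg (sub_nonneg.2 (four_mul_sq_le_four_pow n)) (by positivity)
      simp only [hn, if_false]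
      linarith
  linarith

lemma sinh_sub_self_pos {t : ℝ} (ht : 0 < t) : 0 < sinh t - t :=
  sub_pos.2 (self_lt_sinh_iff.2 ht)

lemma monotoneOn_cosh_mul_self_sub_sinh_div_sinh_sub_self :
    MonotoneOn (fun t ↦ (cosh t * t - sinh t) / (sinh t - t)) (Ioi 0) := by
  have hderiv : ∀ t ∈ Ioi (0 : ℝ), HasDerivAt (fun t ↦ (cosh t * t - sinh t) / (sinh t - t))
      ((t * sinh t * (sinh t - t) - (cosh t * t - sinh t) * (cosh t - 1)) / (sinh t - t) ^ 2)
      t := by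
    intro t ht
    have hnum : HasDerivAt (fun t ↦ cosh t * t - sinh t) (t * sinh t) t :=
      (((hasDerivAt_cosh t).mul (hasDerivAt_id' t)).sub (hasDerivAt_sinh t)).congr_deriv
        (by ring)
    exact hnum.div ((hasDerivAt_sinh t).sub (hasDerivAt_id t)) (sinh_sub_self_pos ht).ne'
  refine monotoneOn_of_hasDerivWithinAt_nonneg (convex_Ioi 0)
    (fun t ht ↦ (hderiv t ht).continuousAt.continuousWithinAt)
    (fun t ht ↦ (hderiv t (interior_subset ht)).hasDerivWithinAt) fun t ht ↦ ?_
  rw [interior_Ioi] at ht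
  refine div_nonneg ?_ (sq_nonneg _)
  have h := sq_mul_sinh_le_cosh_sub_one_mul_sinh_add_self ht.le
  linear_combination h + t * cosh_sq_sub_sinh_sq t

lemma arsinh_le_mul_div_iff {b x : ℝ} (hb : -1 ≤ b) (hx : 0 < x) :
    arsinh x ≤ (b + 1) * x / (b + √(1 + x ^ 2)) ↔
      (√(1 + x ^ 2) * arsinh x - x) / (x - arsinh x) ≤ b := by
  have hgap : 0 < x - arsinh x := by
    simpa only [sinh_arsinh] using sinh_sub_self_pos (arsinh_pos_iff.2 hx)
  have hcosh : 1 < √(1 + x ^ 2) := by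
    rw [← cosh_arsinh]
    exact one_lt_cosh.2 (arsinh_pos_iff.2 hx).ne'
  rw [le_div_iff₀ (by linarith), div_le_iff₀ hgap]
  constructor <;> intro h <;> linarith

theorem stmt13 (r : ℝ) (hr : 0 < r) (b : ℝ) (hb : 0 ≤ b) :
    (∀ x : ℝ, 0 ≤ x → x ≤ r →
      Real.arsinh x ≤ (b + 1) * x / (b + Real.sqrt (1 + x ^ 2))) ↔
    (Real.sqrt (1 + r ^ 2) * Real.arsinh r - r) / (r - Real.arsinh r) ≤ b := by
  constructor
  · intro h
    exact (arsinh_le_mul_div_iff (by linarith) hr).1 (h r hr.le le_rfl)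
  · intro hbound x hx0 hxr
    rcases hx0.eq_or_lt with rfl | hx
    · simp
    refine (arsinh_le_mul_div_iff (by linarith) hx).2 (le_trans ?_ hbound)
    simpa only [sinh_arsinh, cosh_arsinh] using
      monotoneOn_cosh_mul_self_sub_sinh_div_sinh_sub_self (arsinh_pos_iff.2 hx)
        (arsinh_pos_iff.2 hr) (arsinh_le_arsinh.2 hxr)
end

section
/- For every real θ ≤ −1, the function h_θ(x) = x·(θ/√(x² + 1) + 1)/(θ + 1/√(x² + 1)) − arcsinh(x) is strictly decreasing on (0, ∞). -/
/-! With `s = √(x² + 1)`, a direct computation gives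
`h_θ'(x) = x² (θ s - θ² + 2) / (s (θ s + 1)²)`.
For `θ ≤ -1` and `x > 0` we have `s > 1`, so `θ s < θ` and
`θ s - θ² + 2 < θ - θ² + 2 = (2 - θ)(1 + θ) ≤ 0`: the derivative is negative on `(0, ∞)`. -/

open Real Set

noncomputable def h (θ x : ℝ) : ℝ :=
  x * (θ / √(x ^ 2 + 1) + 1) / (θ + 1 / √(x ^ 2 + 1)) - arsinh x

lemma one_lt_sqrt_sq_add_one {x : ℝ} (hx : x ≠ 0) : 1 < √(x ^ 2 + 1) := by
  rw [lt_sqrt zero_le_one]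
  have := pow_pos (abs_pos.mpr hx) 2
  rw [sq_abs] at this
  linarith

lemma hasDerivAt_sqrt_sq_add_one (x : ℝ) :
    HasDerivAt (fun y : ℝ => √(y ^ 2 + 1)) (x / √(x ^ 2 + 1)) x := by
  have hpos : 0 < x ^ 2 + 1 := by positivity
  convert ((hasDerivAt_pow 2 x).add_const 1).sqrt hpos.ne' using 1
  field_simp
  ring

lemma hasDerivAt_h {θ x : ℝ} (hθx : θ * √(x ^ 2 + 1) + 1 ≠ 0) :
    HasDerivAt (h θ)
      (x ^ 2 * (θ * √(x ^ 2 + 1) - θ ^ 2 + 2)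
        / (√(x ^ 2 + 1) * (θ * √(x ^ 2 + 1) + 1) ^ 2)) x := by
  set s := √(x ^ 2 + 1) with hs_def
  have hs_sq : s ^ 2 = x ^ 2 + 1 := sq_sqrt (by positivity)
  have hs_pos : 0 < s := sqrt_pos.mpr (by positivity)
  have hden : θ + 1 / s ≠ 0 := by
    rw [← mul_ne_zero_iff_right hs_pos.ne', add_mul, one_div_mul_cancel hs_pos.ne']
    exact hθx
  have hS := hasDerivAt_sqrt_sq_add_one x
  have hnum : HasDerivAt (fun y : ℝ => y * (θ / √(y ^ 2 + 1) + 1))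
      (1 * (θ / s + 1) + x * ((0 * s - θ * (x / s)) / s ^ 2)) x :=
    (hasDerivAt_id x).mul (((hasDerivAt_const x θ).div hS hs_pos.ne').add_const 1)
  have hdenom : HasDerivAt (fun y : ℝ => θ + 1 / √(y ^ 2 + 1))
      ((0 * s - 1 * (x / s)) / s ^ 2) x :=
    ((hasDerivAt_const x 1).div hS hs_pos.ne').const_add θ
  have harsinh : HasDerivAt arsinh (1 / s) x := by
    convert hasDerivAt_arsinh x using 1
    rw [hs_def, one_div, add_comm]
  refine ((hnum.div hdenom hden).sub harsinh).congr_deriv ?_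
  rw [← hs_def]
  field_simp
  linear_combination (θ * s ^ 2 + s) * hs_sq

lemma mul_sub_sq_add_two_neg {θ s : ℝ} (hθ : θ ≤ -1) (hs : 1 < s) :
    θ * s - θ ^ 2 + 2 < 0 := by
  nlinarith [mul_nonneg (by linarith : (0 : ℝ) ≤ -(θ + 1)) (by linarith : (0 : ℝ) ≤ 2 - θ)]

theorem stmt14 (θ : ℝ) (hθ : θ ≤ -1) :
    StrictAntiOn
      (fun x : ℝ => x * (θ / Real.sqrt (x ^ 2 + 1) + 1) / (θ + 1 / Real.sqrt (x ^ 2 + 1))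
        - Real.arsinh x)
      (Set.Ioi (0 : ℝ)) := by
  have hs : ∀ x ∈ Ioi (0 : ℝ), 1 < √(x ^ 2 + 1) := fun x hx =>
    one_lt_sqrt_sq_add_one (ne_of_gt hx)
  have hθs : ∀ x ∈ Ioi (0 : ℝ), θ * √(x ^ 2 + 1) + 1 < 0 := fun x hx => by
    nlinarith [hs x hx]
  have hderiv := fun x hx => hasDerivAt_h (hθs x hx).ne
  refine strictAntiOn_of_hasDerivWithinAt_neg (convex_Ioi 0)
    (fun x hx => (hderiv x hx).continuousAt.continuousWithinAt)
    (fun x hx => (hderiv x (interior_subset hx)).hasDerivWithinAt) (fun x hx => ?_)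
  rw [interior_Ioi] at hx
  exact div_neg_of_neg_of_pos
    (mul_neg_of_pos_of_neg (pow_pos hx 2) (mul_sub_sq_add_two_neg hθ (hs x hx)))
    (mul_pos (zero_lt_one.trans (hs x hx)) (sq_pos_of_neg (hθs x hx)))
end
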